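/- Let l, T > 0, N, j₀ ∈ ℕ with N ≥ 2, h = l/N, τ = T/j₀, grid points x_i = ih, t_j = jτ. Let α : {0,…,N} → (0,1) with α_i = α(x_i), let c₁ > 0 and β₀ > 0, and for each time level j let a_i^{j+1/2} ≥ c₁ (1 ≤ i ≤ N), d_i^{j+1/2} ≥ 0 (0 ≤ i ≤ N), β̃₁^{j+1/2} ≥ β₀, β̃₂^{j+1/2} ≥ β₀, and let φ_i^{j+1/2} (1 ≤ i ≤ N−1), μ̃₁^{j+1/2}, μ̃₂^{j+1/2} be given, with φ_0^{j+1/2} = 2μ̃₁^{j+1/2}/h and φ_N^{j+1/2} = 2μ̃₂^{j+1/2}/h. Suppose σ ≥ 1/(3 − 2^{1−min_i α_i}) and σ ≤ 1, and y_i^j solves Δ_{0t_j}^{α_i} y_i = (Λ(σ y^{j+1} + (1−σ)y^j))_i + φ_i^{j+1/2} for all 0 ≤ i ≤ N, 0 ≤ j ≤ j₀−1, with y_i^0 = u₀(x_i), where Λ is the Robin difference operator below. Then for every 0 ≤ j ≤ j₀−1, with γ = min{c₁, β₀} and δ = max{1+l, l²}: [ (1/Γ(2−α_i)) , Σ_{j'=0}^{j}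 (t_{j−j'+1}^{1−α_i} − t_{j−j'}^{1−α_i}) (y^{j'+1})² ] + γ Σ_{j'=0}^{j} ( ‖(y_x̄^{(σ)})^{j'+1}‖₀'² + ((y_0^{(σ)})^{j'+1})² + ((y_N^{(σ)})^{j'+1})² ) τ ≤ (δ/γ) Σ_{j'=0}^{j} ( (μ̃₁^{j'+1/2})² + (μ̃₂^{j'+1/2})² + ‖φ^{j'}‖₀² ) τ + [ t_{j+1}^{1−α_i}/Γ(2−α_i) , u₀²(x_i) ]. -/

import Mathlib

/-!
Energy method. Test the scheme at level `j` with `2 y^{(σ)}` in the trapezoidal inner product.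

* Alikhanov's inequality `Δ^α (y²) ≤ 2 y^{(σ)} Δ^α y`: the Caputo weights
  `t_{k+1}^{1-α} − t_k^{1-α}` are nonnegative and decreasing (concavity of `t^{1-α}`), so Abel
  summation leaves only the last term, and that one is nonnegative because
  `(1 - σ)² ≤ σ² (2 − 2^{1-α})` for `σ ≥ 1/(3 − 2^{1-α})`.
* Summation by parts gives `[Λv, v] ≤ −γ (‖v_x̄‖₀'² + v_0² + v_N²)`.
* The source term is split by Young's inequality with `ε = γ/δ`; since each `v_i` is the mean of
  its telescoping expansions from the two ends, `‖v‖₀²` is bounded by `l (v_0² + v_N²)` and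
  `l² ‖v_x̄‖₀'²`, so it is absorbed.

Summed over the time levels, the double sum of Caputo differences telescopes to the weighted squares
at the last level minus those of the initial data.
-/

open Finset

/-- The discrete analogue of the Caputo fractional derivative of order `α`
on the uniform grid `t_j = jτ`:
`Δ_{0t_j}^α y = (1/Γ(2-α)) Σ_{s=0}^{j} (t_{j-s+1}^{1-α} − t_{j-s}^{1-α}) (y^{s+1} − y^s)/τ`. -/
noncomputable def dCaputo (α τ : ℝ) (y : ℕ → ℝ) (j : ℕ) : ℝ :=
  (1 / Real.Gamma (2 - α)) *
    ∑ s ∈ Finset.range (j + 1),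
      (((((j : ℕ) - s + 1 : ℕ) : ℝ) * τ) ^ (1 - α) -
        ((((j : ℕ) - s : ℕ) : ℝ) * τ) ^ (1 - α)) * (y (s + 1) - y s) / τ

noncomputable def caputoWeight (α τ : ℝ) (k : ℕ) : ℝ :=
  (((k + 1 : ℕ) : ℝ) * τ) ^ (1 - α) - ((k : ℝ) * τ) ^ (1 - α)

theorem dCaputo_eq (α τ : ℝ) (y : ℕ → ℝ) (j : ℕ) :
    dCaputo α τ y j =
      1 / Real.Gamma (2 - α) *
        ∑ s ∈ range (j + 1), caputoWeight α τ (j - s) * (y (s + 1) - y s) / τ :=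
  rfl

section CaputoWeight

variable {α τ : ℝ}

theorem caputoWeight_nonneg (hα : α ≤ 1) (hτ : 0 ≤ τ) (k : ℕ) : 0 ≤ caputoWeight α τ k :=
  sub_nonneg.2 <| Real.rpow_le_rpow (by positivity) (by gcongr; simp) (by linarith)

theorem caputoWeight_succ_le (hα₀ : 0 ≤ α) (hα₁ : α ≤ 1) (hτ : 0 ≤ τ) (k : ℕ) :
    caputoWeight α τ (k + 1) ≤ caputoWeight α τ k := by
  have hmid := (Real.concaveOn_rpow (p := 1 - α) (by linarith) (by linarith)).2
    (Set.mem_Ici.2 (by positivity : (0:ℝ) ≤ k * τ))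
    (Set.mem_Ici.2 (by positivity : (0:ℝ) ≤ (k + 2) * τ))
    (by norm_num : (0:ℝ) ≤ 1 / 2) (by norm_num : (0:ℝ) ≤ 1 / 2) (by norm_num)
  have hk : 1 / 2 * ((k : ℝ) * τ) + 1 / 2 * (((k : ℝ) + 2) * τ) = ((k : ℝ) + 1) * τ := by ring
  simp only [smul_eq_mul, hk] at hmid
  simp only [caputoWeight]
  push_cast
  rw [show (k : ℝ) + 1 + 1 = k + 2 by ring]
  linarith

theorem caputoWeight_zero (hα : α < 1) : caputoWeight α τ 0 = τ ^ (1 - α) := by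
  simp [caputoWeight, Real.zero_rpow (by linarith : 1 - α ≠ 0)]

theorem caputoWeight_zero_sub_one (hα : α < 1) (hτ : 0 ≤ τ) :
    caputoWeight α τ 0 - caputoWeight α τ 1 = (2 - 2 ^ (1 - α)) * τ ^ (1 - α) := by
  rw [caputoWeight_zero hα, caputoWeight]
  norm_num [Real.mul_rpow, hτ]
  ring

end CaputoWeight

theorem le_sum_mul_sub_succ_of_antitone {C b : ℕ → ℝ} (hC : ∀ k, 0 ≤ C k) (hC_anti : Antitone C)
    (hb : ∀ s, 0 ≤ b s) (j : ℕ) :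
    (C 0 - C 1) * b j - C 0 * b (j + 1) ≤ ∑ s ∈ range (j + 1), C (j - s) * (b s - b (s + 1)) := by
  induction j generalizing C with
  | zero =>
    simp only [zero_add, range_one, zero_tsub, sum_singleton]
    nlinarith [mul_nonneg (hC 1) (hb 0)]
  | succ j ih =>
    have ih' := ih (C := fun k => C (k + 1)) (fun k => hC _) (fun m n hmn => hC_anti (by omega))
    have hshift : ∀ s ∈ range (j + 1), C (j + 1 - s) * (b s - b (s + 1)) =
        C (j - s + 1) * (b s - b (s + 1)) := by
      intro s hs
      rw [Nat.sub_add_comm (Nat.lt_succ_iff.1 (mem_range.1 hs))]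
    rw [sum_range_succ, sum_congr rfl hshift, Nat.sub_self]
    nlinarith [mul_nonneg (sub_nonneg.2 (hC_anti (Nat.le_succ 1))) (hb j)]

theorem one_sub_sq_le_sq_mul {σ x : ℝ} (hx₀ : 0 ≤ x) (hx₁ : x ≤ 1) (hσ : 1 ≤ σ * (1 + x))
    (hσ₁ : σ ≤ 1) : (1 - σ) ^ 2 ≤ σ ^ 2 * x := by
  have h : 1 - σ ≤ σ * x := by linarith
  nlinarith [mul_le_mul h h (by linarith) (by nlinarith),
    mul_le_mul_of_nonneg_left hx₁ (mul_nonneg (sq_nonneg σ) hx₀)]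

theorem dCaputo_sq_le {α τ σ : ℝ} (hα₀ : 0 ≤ α) (hα₁ : α < 1) (hτ : 0 < τ)
    (hσ : 1 / (3 - (2 : ℝ) ^ (1 - α)) ≤ σ) (hσ₁ : σ ≤ 1) (y : ℕ → ℝ) (j : ℕ) :
    dCaputo α τ (fun s => y s ^ 2) j ≤ 2 * (σ * y (j + 1) + (1 - σ) * y j) * dCaputo α τ y j := by
  set v := σ * y (j + 1) + (1 - σ) * y j
  set b : ℕ → ℝ := fun s => (v - y s) ^ 2
  have h2p : (1 : ℝ) ≤ 2 ^ (1 - α) := Real.one_le_rpow (by norm_num) (by linarith)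
  have h2p' : (2 : ℝ) ^ (1 - α) ≤ 2 := by
    simpa using Real.rpow_le_rpow_of_exponent_le (x := 2) (by norm_num) (by linarith : 1 - α ≤ 1)
  have hσx : 1 ≤ σ * (1 + (2 - 2 ^ (1 - α))) := by
    rw [div_le_iff₀ (by linarith)] at hσ
    linarith
  have hlast : caputoWeight α τ 0 * b (j + 1) ≤
      (caputoWeight α τ 0 - caputoWeight α τ 1) * b j := by
    have hbj : b j = σ ^ 2 * (y (j + 1) - y j) ^ 2 := by simp only [b, v]; ring
    have hbj₁ : b (j + 1) = (1 - σ) ^ 2 * (y (j + 1) - y j) ^ 2 := by simp only [b, v]; ring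
    rw [caputoWeight_zero_sub_one hα₁ hτ.le, caputoWeight_zero hα₁, hbj, hbj₁]
    calc τ ^ (1 - α) * ((1 - σ) ^ 2 * (y (j + 1) - y j) ^ 2)
        ≤ τ ^ (1 - α) * (σ ^ 2 * (2 - 2 ^ (1 - α)) * (y (j + 1) - y j) ^ 2) := by
          gcongr
          exact one_sub_sq_le_sq_mul (by linarith) (by linarith) hσx hσ₁
      _ = _ := by ring
  have hsum : 0 ≤ ∑ s ∈ range (j + 1), caputoWeight α τ (j - s) * (b s - b (s + 1)) :=
    le_trans (by nlinarith [hlast])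
      (le_sum_mul_sub_succ_of_antitone (caputoWeight_nonneg hα₁.le hτ.le)
        (antitone_nat_of_succ_le (caputoWeight_succ_le hα₀ hα₁.le hτ.le)) (fun s => sq_nonneg _) j)
  have hΓ : 0 < Real.Gamma (2 - α) := Real.Gamma_pos_of_pos (by linarith)
  -- `2 v (y' - y) - (y'² - y²) = (v - y)² - (v - y')²`
  have hdiff : 2 * v * dCaputo α τ y j - dCaputo α τ (fun s => y s ^ 2) j =
      1 / Real.Gamma (2 - α) / τ *
        ∑ s ∈ range (j + 1), caputoWeight α τ (j - s) * (b s - b (s + 1)) := by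
    simp only [dCaputo_eq, mul_sum, ← sum_sub_distrib]
    refine sum_congr rfl fun s _ => ?_
    simp only [b]
    field_simp
    ring
  nlinarith [mul_nonneg (div_nonneg (one_div_nonneg.2 hΓ.le) hτ.le) hsum]

theorem sum_sum_sub_mul_sub {R : Type*} [CommRing R] (F g : ℕ → R) (hF : F 0 = 0) (j : ℕ) :
    ∑ t ∈ range (j + 1), ∑ s ∈ range (t + 1), (F (t - s + 1) - F (t - s)) * (g (s + 1) - g s) =
      ∑ s ∈ range (j + 1), (F (j - s + 1) - F (j - s)) * g (s + 1) - F (j + 1) * g 0 := by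
  induction j with
  | zero =>
    simp only [zero_add, range_one, sum_singleton, zero_tsub, hF, sub_zero]
    ring
  | succ j ih =>
    rw [sum_range_succ, ih]
    simp only [mul_sub, sum_sub_distrib]
    rw [sum_range_succ' (fun s => (F (j + 1 - s + 1) - F (j + 1 - s)) * g s)]
    simp only [Nat.add_sub_add_right, Nat.sub_zero]
    ring

theorem sum_dCaputo_mul {α τ : ℝ} (hα : α < 1) (hτ : τ ≠ 0) (g : ℕ → ℝ) (j : ℕ) :
    ∑ t ∈ range (j + 1), dCaputo α τ g t * τ =
      1 / Real.Gamma (2 - α) * ∑ s ∈ range (j + 1), caputoWeight α τ (j - s) * g (s + 1) -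
        (((j + 1 : ℕ) : ℝ) * τ) ^ (1 - α) / Real.Gamma (2 - α) * g 0 := by
  have hF := sum_sum_sub_mul_sub (fun m : ℕ => ((m : ℝ) * τ) ^ (1 - α)) g
    (by simp [Real.zero_rpow (by linarith : 1 - α ≠ 0)]) j
  calc ∑ t ∈ range (j + 1), dCaputo α τ g t * τ
      = 1 / Real.Gamma (2 - α) * ∑ t ∈ range (j + 1), ∑ s ∈ range (t + 1),
          caputoWeight α τ (t - s) * (g (s + 1) - g s) := by
        simp only [dCaputo_eq, mul_sum, sum_mul]
        refine sum_congr rfl fun t _ => sum_congr rfl fun s _ => ?_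
        field_simp
    _ = _ := by
        simp only [caputoWeight] at hF ⊢
        rw [hF]
        ring

/-- The trapezoidal sum `[u, 1]` of the paper. -/
noncomputable def gridSum (N : ℕ) (h : ℝ) (u : ℕ → ℝ) : ℝ :=
  ∑ i ∈ Icc 1 (N - 1), h * u i + 0.5 * h * u 0 + 0.5 * h * u N

noncomputable def interiorNormSq (N : ℕ) (h : ℝ) (v : ℕ → ℝ) : ℝ :=
  ∑ i ∈ Icc 1 (N - 1), h * v i ^ 2

noncomputable def gradNormSq (N : ℕ) (h : ℝ) (v : ℕ → ℝ) : ℝ :=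
  ∑ i ∈ Icc 1 N, h * ((v i - v (i - 1)) / h) ^ 2

noncomputable def energyNormSq (N : ℕ) (h : ℝ) (v : ℕ → ℝ) : ℝ :=
  gradNormSq N h v + v 0 ^ 2 + v N ^ 2

noncomputable def robinOp (N : ℕ) (h β₁ β₂ : ℝ) (a d v : ℕ → ℝ) (i : ℕ) : ℝ :=
  if i = 0 then (a 1 * (v 1 - v 0) / h - β₁ * v 0) / (0.5 * h)
  else if i = N then (-(a N) * (v N - v (N - 1)) / h - β₂ * v N) / (0.5 * h)
  else (a (i + 1) * (v (i + 1) - v i) / h - a i * (v i - v (i - 1)) / h) / h - d i * v i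

section GridSum

variable {N : ℕ} {h : ℝ}

theorem gridSum_le_gridSum (hh : 0 ≤ h) {u w : ℕ → ℝ} (huw : ∀ i ≤ N, u i ≤ w i) :
    gridSum N h u ≤ gridSum N h w := by
  unfold gridSum
  gcongr with i hi
  · exact huw i (by simp at hi; omega)
  · exact huw 0 (Nat.zero_le N)
  · exact huw N le_rfl

theorem gridSum_congr {u w : ℕ → ℝ} (huw : ∀ i ≤ N, u i = w i) :
    gridSum N h u = gridSum N h w := by
  unfold gridSum
  rw [sum_congr rfl fun i hi => by rw [huw i (by simp at hi; omega)], huw 0 (Nat.zero_le N),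
    huw N le_rfl]

end GridSum

theorem sum_Icc_mul_sub_succ {R : Type*} [CommRing R] (v w : ℕ → R) (n : ℕ) :
    ∑ i ∈ Icc 1 n, v i * (w (i + 1) - w i) =
      v (n + 1) * w (n + 1) - v 0 * w 1 - ∑ i ∈ Icc 1 (n + 1), (v i - v (i - 1)) * w i := by
  induction n with
  | zero =>
    simp only [Order.lt_one_iff, Icc_eq_empty_of_lt, sum_empty, zero_add, Icc_self, sum_singleton,
      tsub_self]
    ring
  | succ n ih =>
    rw [sum_Icc_succ_top (by omega), ih, sum_Icc_succ_top (by omega : 1 ≤ n + 1 + 1)]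
    simp only [Nat.add_sub_cancel]
    ring

theorem gridSum_robinOp_mul_self {N : ℕ} (hN : 1 ≤ N) {h : ℝ} (hh : h ≠ 0) (β₁ β₂ : ℝ)
    (a d v : ℕ → ℝ) :
    gridSum N h (fun i => robinOp N h β₁ β₂ a d v i * v i) =
      -∑ i ∈ Icc 1 N, h * a i * ((v i - v (i - 1)) / h) ^ 2 -
        ∑ i ∈ Icc 1 (N - 1), h * d i * v i ^ 2 - β₁ * v 0 ^ 2 - β₂ * v N ^ 2 := by
  set w : ℕ → ℝ := fun i => a i * (v i - v (i - 1)) / h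
  have hint : ∀ i ∈ Icc 1 (N - 1), h * (robinOp N h β₁ β₂ a d v i * v i) =
      v i * (w (i + 1) - w i) - h * d i * v i ^ 2 := by
    intro i hi
    obtain ⟨hi₁, hi₂⟩ := mem_Icc.1 hi
    rw [robinOp, if_neg (by omega), if_neg (by omega)]
    simp only [w, Nat.add_sub_cancel]
    field_simp
  have hparts := sum_Icc_mul_sub_succ v w (N - 1)
  rw [Nat.sub_add_cancel hN] at hparts
  have hgrad : ∀ i ∈ Icc 1 N, (v i - v (i - 1)) * w i = h * a i * ((v i - v (i - 1)) / h) ^ 2 := by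
    intro i _
    simp only [w]
    field_simp
  rw [gridSum, sum_congr rfl hint, sum_sub_distrib, hparts, sum_congr rfl hgrad, robinOp,
    if_pos rfl, robinOp, if_neg (by omega), if_pos rfl]
  simp only [w, Nat.sub_self]
  field_simp
  ring

theorem gridSum_robinOp_mul_self_le {N : ℕ} (hN : 1 ≤ N) {h γ β₁ β₂ : ℝ} (hh : 0 < h)
    {a d : ℕ → ℝ} (ha : ∀ i ∈ Icc 1 N, γ ≤ a i) (hd : ∀ i ∈ Icc 1 (N - 1), 0 ≤ d i)
    (hβ₁ : γ ≤ β₁) (hβ₂ : γ ≤ β₂) (v : ℕ → ℝ) :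
    gridSum N h (fun i => robinOp N h β₁ β₂ a d v i * v i) ≤ -(γ * energyNormSq N h v) := by
  have hgrad : γ * gradNormSq N h v ≤ ∑ i ∈ Icc 1 N, h * a i * ((v i - v (i - 1)) / h) ^ 2 := by
    rw [gradNormSq, mul_sum]
    refine sum_le_sum fun i hi => ?_
    nlinarith [mul_le_mul_of_nonneg_right (ha i hi)
      (mul_nonneg hh.le (sq_nonneg ((v i - v (i - 1)) / h)))]
  have hreact : 0 ≤ ∑ i ∈ Icc 1 (N - 1), h * d i * v i ^ 2 :=
    sum_nonneg fun i hi => by have := hd i hi; positivity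
  rw [gridSum_robinOp_mul_self hN hh.ne', energyNormSq]
  nlinarith [mul_le_mul_of_nonneg_right hβ₁ (sq_nonneg (v 0)),
    mul_le_mul_of_nonneg_right hβ₂ (sq_nonneg (v N))]

theorem two_mul_mul_le_mul_sq_add_inv_mul_sq {ε : ℝ} (hε : 0 < ε) (x z : ℝ) :
    2 * x * z ≤ ε * x ^ 2 + ε⁻¹ * z ^ 2 := by
  have key : ε * x ^ 2 + ε⁻¹ * z ^ 2 - 2 * x * z = ε⁻¹ * (ε * x - z) ^ 2 := by
    field_simp
    ring
  nlinarith [mul_nonneg (inv_nonneg.2 hε.le) (sq_nonneg (ε * x - z))]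

theorem two_mul_gridSum_mul_le {N : ℕ} {h ε μ₁ μ₂ : ℝ} (hh : 0 < h) (hε : 0 < ε) {φ : ℕ → ℝ}
    (hφ₀ : φ 0 = 2 * μ₁ / h) (hφN : φ N = 2 * μ₂ / h) (v : ℕ → ℝ) :
    2 * gridSum N h (fun i => φ i * v i) ≤
      ε * (interiorNormSq N h v + v 0 ^ 2 + v N ^ 2) +
        ε⁻¹ * (μ₁ ^ 2 + μ₂ ^ 2 + interiorNormSq N h φ) := by
  have hint : 2 * ∑ i ∈ Icc 1 (N - 1), h * (φ i * v i) ≤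
      ε * interiorNormSq N h v + ε⁻¹ * interiorNormSq N h φ := by
    rw [interiorNormSq, interiorNormSq, mul_sum, mul_sum, mul_sum, ← sum_add_distrib]
    gcongr with i
    nlinarith [mul_le_mul_of_nonneg_left
      (two_mul_mul_le_mul_sq_add_inv_mul_sq hε (v i) (φ i)) hh.le]
  have h₀ : 2 * (0.5 * h * (φ 0 * v 0)) = 2 * v 0 * μ₁ := by rw [hφ₀]; field_simp; ring
  have hN : 2 * (0.5 * h * (φ N * v N)) = 2 * v N * μ₂ := by rw [hφN]; field_simp; ring
  have := two_mul_mul_le_mul_sq_add_inv_mul_sq hε (v 0) μ₁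
  have := two_mul_mul_le_mul_sq_add_inv_mul_sq hε (v N) μ₂
  rw [gridSum]
  nlinarith

theorem abs_sub_le_sum_Ioc_abs_sub (v : ℕ → ℝ) {i m : ℕ} (him : i ≤ m) :
    |v m - v i| ≤ ∑ k ∈ Ioc i m, |v k - v (k - 1)| := by
  induction m, him using Nat.le_induction with
  | base => simp
  | succ m him ih =>
    rw [sum_Ioc_succ_top him, Nat.add_sub_cancel]
    linarith [abs_sub_le (v (m + 1)) (v m) (v i), abs_sub_comm (v (m + 1)) (v m)]

theorem two_mul_abs_le_add_sum_abs_sub (v : ℕ → ℝ) {i N : ℕ} (hi : i ≤ N) :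
    2 * |v i| ≤ |v 0| + |v N| + ∑ k ∈ Icc 1 N, |v k - v (k - 1)| := by
  have hIcc : Icc 1 N = Ioc 0 N := Icc_add_one_left_eq_Ioc 0 N
  rw [hIcc, ← sum_Ioc_consecutive _ (Nat.zero_le i) hi]
  linarith [abs_sub_le_sum_Ioc_abs_sub v (Nat.zero_le i), abs_sub_le_sum_Ioc_abs_sub v hi,
    abs_sub_abs_le_abs_sub (v i) (v 0), abs_sub_abs_le_abs_sub (v i) (v N),
    abs_sub_comm (v N) (v i)]

theorem sq_le_add_mul_sum_sq_sub (v : ℕ → ℝ) {i N : ℕ} (hi : i ≤ N) :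
    v i ^ 2 ≤ 3 / 4 * (v 0 ^ 2 + v N ^ 2) + 3 / 4 * N * ∑ k ∈ Icc 1 N, (v k - v (k - 1)) ^ 2 := by
  set S := ∑ k ∈ Icc 1 N, |v k - v (k - 1)|
  have hS : 0 ≤ S := sum_nonneg fun k _ => abs_nonneg _
  have hCS : S ^ 2 ≤ N * ∑ k ∈ Icc 1 N, (v k - v (k - 1)) ^ 2 := by
    simpa [sq_abs] using sq_sum_le_card_mul_sum_sq (s := Icc 1 N) (f := fun k => |v k - v (k - 1)|)
  have h2 := two_mul_abs_le_add_sum_abs_sub v hi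
  have h4 : 4 * v i ^ 2 ≤ (|v 0| + |v N| + S) ^ 2 := by
    rw [← sq_abs (v i)]
    nlinarith [abs_nonneg (v i)]
  nlinarith [sq_abs (v 0), sq_abs (v N), sq_nonneg (|v 0| - |v N|), sq_nonneg (|v 0| - S),
    sq_nonneg (|v N| - S)]

theorem interiorNormSq_le {N : ℕ} {h : ℝ} (hh : 0 < h) (v : ℕ → ℝ) :
    interiorNormSq N h v ≤
      3 * (N * h) / 4 * (v 0 ^ 2 + v N ^ 2) + 3 * (N * h) ^ 2 / 4 * gradNormSq N h v := by
  set Q := 3 / 4 * (v 0 ^ 2 + v N ^ 2) + 3 / 4 * N * ∑ k ∈ Icc 1 N, (v k - v (k - 1)) ^ 2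
  have hQ : 0 ≤ Q := by positivity
  have hcard : ((Icc 1 (N - 1)).card : ℝ) ≤ N := by
    rw [Nat.card_Icc]; exact_mod_cast (by omega : N - 1 + 1 - 1 ≤ N)
  have hgrad : gradNormSq N h v = (∑ k ∈ Icc 1 N, (v k - v (k - 1)) ^ 2) / h := by
    rw [gradNormSq, sum_div]
    refine sum_congr rfl fun k _ => ?_
    field_simp
  calc interiorNormSq N h v ≤ ∑ i ∈ Icc 1 (N - 1), h * Q := by
        refine sum_le_sum fun i hi => ?_
        gcongr
        exact sq_le_add_mul_sum_sq_sub v (by simp at hi; omega)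
    _ = (Icc 1 (N - 1)).card * h * Q := by rw [sum_const, nsmul_eq_mul, mul_assoc]
    _ ≤ N * h * Q := by gcongr
    _ = _ := by rw [hgrad]; field_simp; ring

theorem gridSum_add_energyNormSq_le {N : ℕ} (hN : 1 ≤ N) {h γ δ β₁ β₂ μ₁ μ₂ : ℝ} (hh : 0 < h)
    (hγ : 0 < γ) (hδ₁ : 1 + N * h ≤ δ) (hδ₂ : (N * h) ^ 2 ≤ δ) {a d φ : ℕ → ℝ}
    (ha : ∀ i ∈ Icc 1 N, γ ≤ a i) (hd : ∀ i ∈ Icc 1 (N - 1), 0 ≤ d i)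
    (hβ₁ : γ ≤ β₁) (hβ₂ : γ ≤ β₂) (hφ₀ : φ 0 = 2 * μ₁ / h) (hφN : φ N = 2 * μ₂ / h)
    {D Dsq v : ℕ → ℝ} (hDsq : ∀ i ≤ N, Dsq i ≤ 2 * v i * D i)
    (hD : ∀ i ≤ N, D i = robinOp N h β₁ β₂ a d v i + φ i) :
    gridSum N h Dsq + γ * energyNormSq N h v ≤
      δ / γ * (μ₁ ^ 2 + μ₂ ^ 2 + interiorNormSq N h φ) := by
  have hδ : 0 < δ := by nlinarith
  set ε := γ / δ
  have hε : 0 < ε := div_pos hγ hδ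
  have htest : gridSum N h Dsq ≤
      2 * gridSum N h (fun i => robinOp N h β₁ β₂ a d v i * v i) +
        2 * gridSum N h (fun i => φ i * v i) := by
    calc gridSum N h Dsq ≤ gridSum N h (fun i => 2 * v i * D i) := gridSum_le_gridSum hh.le hDsq
      _ = gridSum N h (fun i => 2 * (robinOp N h β₁ β₂ a d v i * v i) + 2 * (φ i * v i)) :=
          gridSum_congr fun i hi => by rw [hD i hi]; ring
      _ = _ := by simp only [gridSum, mul_add, sum_add_distrib, mul_sum, mul_left_comm h 2]; ring
  have hdiss := gridSum_robinOp_mul_self_le hN hh ha hd hβ₁ hβ₂ v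
  have hsrc := two_mul_gridSum_mul_le (N := N) hh hε hφ₀ hφN v
  have hemb := interiorNormSq_le (N := N) hh v
  have hNh : 0 ≤ (N : ℝ) * h := by positivity
  have habsorb : ε * (interiorNormSq N h v + v 0 ^ 2 + v N ^ 2) ≤ γ * energyNormSq N h v := by
    have hG : 0 ≤ gradNormSq N h v := sum_nonneg fun i _ => by positivity
    calc ε * (interiorNormSq N h v + v 0 ^ 2 + v N ^ 2)
        ≤ ε * ((1 + 3 * (N * h) / 4) * (v 0 ^ 2 + v N ^ 2) +
            3 * (N * h) ^ 2 / 4 * gradNormSq N h v) :=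
          mul_le_mul_of_nonneg_left (by linarith) hε.le
      _ ≤ ε * (δ * (v 0 ^ 2 + v N ^ 2) + δ * gradNormSq N h v) := by
          gcongr <;> nlinarith
      _ = γ * energyNormSq N h v := by
          simp only [ε, energyNormSq]; field_simp; ring
  have hεinv : ε⁻¹ = δ / γ := inv_div γ δ
  rw [hεinv] at hsrc
  linarith

theorem sum_gridSum_mul (N : ℕ) (h c : ℝ) (f : ℕ → ℕ → ℝ) (s : Finset ℕ) :
    ∑ t ∈ s, gridSum N h (fun i => f i t) * c = gridSum N h (fun i => ∑ t ∈ s, f i t * c) := by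
  simp only [gridSum, add_mul, sum_add_distrib, mul_sum, sum_mul, mul_assoc]
  rw [sum_comm]

theorem gridSum_sub (N : ℕ) (h : ℝ) (u w : ℕ → ℝ) :
    gridSum N h (fun i => u i - w i) = gridSum N h u - gridSum N h w := by
  simp only [gridSum, mul_sub, sum_sub_distrib]
  ring

theorem gridSum_add_sum_mul_le_of_forall_le {N j : ℕ} {h τ γ C : ℝ} {α : ℕ → ℝ}
    (hα : ∀ i ≤ N, α i < 1) (hτ : 0 < τ) {Y : ℕ → ℕ → ℝ} {E F : ℕ → ℝ}
    (hlevel : ∀ t ∈ range (j + 1),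
      gridSum N h (fun i => dCaputo (α i) τ (Y i) t) + γ * E t ≤ C * F t) :
    gridSum N h (fun i => 1 / Real.Gamma (2 - α i) *
        ∑ s ∈ range (j + 1), caputoWeight (α i) τ (j - s) * Y i (s + 1)) +
        γ * ∑ t ∈ range (j + 1), E t * τ ≤
      C * ∑ t ∈ range (j + 1), F t * τ +
        gridSum N h (fun i =>
          (((j + 1 : ℕ) : ℝ) * τ) ^ (1 - α i) / Real.Gamma (2 - α i) * Y i 0) := by
  have htime : ∑ t ∈ range (j + 1), gridSum N h (fun i => dCaputo (α i) τ (Y i) t) * τ =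
      gridSum N h (fun i => 1 / Real.Gamma (2 - α i) *
        ∑ s ∈ range (j + 1), caputoWeight (α i) τ (j - s) * Y i (s + 1)) -
      gridSum N h (fun i =>
        (((j + 1 : ℕ) : ℝ) * τ) ^ (1 - α i) / Real.Gamma (2 - α i) * Y i 0) := by
    rw [sum_gridSum_mul, ← gridSum_sub]
    exact gridSum_congr fun i hi => sum_dCaputo_mul (hα i hi) hτ.ne' (Y i) j
  have hsum := sum_le_sum fun t ht => mul_le_mul_of_nonneg_right (hlevel t ht) hτ.le
  simp only [add_mul, sum_add_distrib, htime, mul_assoc, ← mul_sum] at hsum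
  linarith

theorem one_div_three_sub_two_rpow_le {m a : ℝ} (hm : 0 ≤ m) (hma : m ≤ a) :
    1 / (3 - (2 : ℝ) ^ (1 - a)) ≤ 1 / (3 - (2 : ℝ) ^ (1 - m)) := by
  have h2 : (2 : ℝ) ^ (1 - m) ≤ 2 := by
    simpa using Real.rpow_le_rpow_of_exponent_le (x := 2) (by norm_num) (by linarith : 1 - m ≤ 1)
  apply one_div_le_one_div_of_le (by linarith)
  linarith [Real.rpow_le_rpow_of_exponent_le (x := 2) (by norm_num) (by linarith : 1 - a ≤ 1 - m)]

/-- Theorem 4: a priori estimate (39) for the weighted difference scheme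
(37)–(38) for the Robin boundary value problem, valid for
`σ ≥ 1/(3 − 2^{1−min_i α_i})`.  Here `y i j ≈ u(x_i, t_j)`, `h = l/N`,
`τ = T/j₀`; `β̃₁ j, β̃₂ j, μ̃₁ j, μ̃₂ j` are the Robin data at the time level
`t_{j+1/2}`, `γ = min{c₁, β₀}` and `δ = max{1+l, l²}`. -/
theorem robin_scheme_apriori_estimate
    (l T c₁ β₀ σ : ℝ) (N j₀ : ℕ) (hN : 2 ≤ N) (hj₀ : 0 < j₀)
    (hl : 0 < l) (hT : 0 < T) (hc₁ : 0 < c₁) (hβ₀ : 0 < β₀)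
    (h τ : ℝ) (hh : h = l / N) (hτ : τ = T / j₀)
    (α : ℕ → ℝ) (hα : ∀ i ≤ N, 0 < α i ∧ α i < 1)
    (a d φ : ℕ → ℕ → ℝ) (βt₁ βt₂ μt₁ μt₂ : ℕ → ℝ)
    (ha : ∀ j < j₀, ∀ i, 1 ≤ i → i ≤ N → c₁ ≤ a i j)
    (hd : ∀ j < j₀, ∀ i ≤ N, 0 ≤ d i j)
    (hβ₁ : ∀ j < j₀, β₀ ≤ βt₁ j) (hβ₂ : ∀ j < j₀, β₀ ≤ βt₂ j)
    (hφ0 : ∀ j < j₀, φ 0 j = 2 * μt₁ j / h)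
    (hφN : ∀ j < j₀, φ N j = 2 * μt₂ j / h)
    (hσ1 : 1 / (3 - (2:ℝ) ^ ((1:ℝ) -
      (Finset.range (N + 1)).inf' (Finset.nonempty_range_iff.mpr (Nat.succ_ne_zero N)) α)) ≤ σ)
    (hσ2 : σ ≤ 1)
    (y : ℕ → ℕ → ℝ) (u₀ : ℝ → ℝ)
    -- the difference scheme (37) at the left boundary node `i = 0`:
    (hscheme0 : ∀ j < j₀,
      dCaputo (α 0) τ (fun s => y 0 s) j =
        (a 1 j * ((σ * y 1 (j + 1) + (1 - σ) * y 1 j) -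
            (σ * y 0 (j + 1) + (1 - σ) * y 0 j)) / h -
          βt₁ j * (σ * y 0 (j + 1) + (1 - σ) * y 0 j)) / (0.5 * h) + φ 0 j)
    -- the difference scheme (37) at the interior nodes `1 ≤ i ≤ N−1`:
    (hscheme : ∀ j < j₀, ∀ i, 1 ≤ i → i ≤ N - 1 →
      dCaputo (α i) τ (fun s => y i s) j =
        ((a (i + 1) j * ((σ * y (i + 1) (j + 1) + (1 - σ) * y (i + 1) j) -
            (σ * y i (j + 1) + (1 - σ) * y i j)) / h -
          a i j * ((σ * y i (j + 1) + (1 - σ) * y i j) -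
            (σ * y (i - 1) (j + 1) + (1 - σ) * y (i - 1) j)) / h) / h -
          d i j * (σ * y i (j + 1) + (1 - σ) * y i j)) + φ i j)
    -- the difference scheme (37) at the right boundary node `i = N`:
    (hschemeN : ∀ j < j₀,
      dCaputo (α N) τ (fun s => y N s) j =
        (-(a N j) * ((σ * y N (j + 1) + (1 - σ) * y N j) -
            (σ * y (N - 1) (j + 1) + (1 - σ) * y (N - 1) j)) / h -
          βt₂ j * (σ * y N (j + 1) + (1 - σ) * y N j)) / (0.5 * h) + φ N j)
    -- initial condition (38):
    (hic : ∀ i ≤ N, y i 0 = u₀ (i * h)) :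
    ∀ j < j₀,
      ((∑ i ∈ Finset.Icc 1 (N - 1), h * ((1 / Real.Gamma (2 - α i)) *
        ∑ j' ∈ Finset.range (j + 1),
          (((((j : ℕ) - j' + 1 : ℕ) : ℝ) * τ) ^ (1 - α i) -
            ((((j : ℕ) - j' : ℕ) : ℝ) * τ) ^ (1 - α i)) * (y i (j' + 1)) ^ 2)) +
        0.5 * h * ((1 / Real.Gamma (2 - α 0)) *
          ∑ j' ∈ Finset.range (j + 1),
            (((((j : ℕ) - j' + 1 : ℕ) : ℝ) * τ) ^ (1 - α 0) -
              ((((j : ℕ) - j' : ℕ) : ℝ) * τ) ^ (1 - α 0)) * (y 0 (j' + 1)) ^ 2) +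
        0.5 * h * ((1 / Real.Gamma (2 - α N)) *
          ∑ j' ∈ Finset.range (j + 1),
            (((((j : ℕ) - j' + 1 : ℕ) : ℝ) * τ) ^ (1 - α N) -
              ((((j : ℕ) - j' : ℕ) : ℝ) * τ) ^ (1 - α N)) * (y N (j' + 1)) ^ 2)) +
      min c₁ β₀ * ∑ j' ∈ Finset.range (j + 1),
        ((∑ i ∈ Finset.Icc 1 N, h *
            (((σ * y i (j' + 1) + (1 - σ) * y i j') -
              (σ * y (i - 1) (j' + 1) + (1 - σ) * y (i - 1) j')) / h) ^ 2) +
          (σ * y 0 (j' + 1) + (1 - σ) * y 0 j') ^ 2 +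
          (σ * y N (j' + 1) + (1 - σ) * y N j') ^ 2) * τ ≤
      max (1 + l) (l ^ 2) / min c₁ β₀ * ∑ j' ∈ Finset.range (j + 1),
        ((μt₁ j') ^ 2 + (μt₂ j') ^ 2 +
          ∑ i ∈ Finset.Icc 1 (N - 1), h * (φ i j') ^ 2) * τ +
      ((∑ i ∈ Finset.Icc 1 (N - 1), h *
          ((((j + 1 : ℕ) : ℝ) * τ) ^ (1 - α i) / Real.Gamma (2 - α i)) *
            (u₀ (i * h)) ^ 2) +
        0.5 * h * ((((j + 1 : ℕ) : ℝ) * τ) ^ (1 - α 0) / Real.Gamma (2 - α 0)) *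
          (u₀ 0) ^ 2 +
        0.5 * h * ((((j + 1 : ℕ) : ℝ) * τ) ^ (1 - α N) / Real.Gamma (2 - α N)) *
          (u₀ (N * h)) ^ 2) := by
  intro j hj
  have hh₀ : 0 < h := hh ▸ div_pos hl (by exact_mod_cast (by omega : 0 < N))
  have hτ₀ : 0 < τ := hτ ▸ div_pos hT (by exact_mod_cast hj₀)
  have hNh : (N : ℝ) * h = l := by rw [hh]; field_simp
  have hσα : ∀ i ≤ N, 1 / (3 - (2 : ℝ) ^ (1 - α i)) ≤ σ := fun i hi =>
    (one_div_three_sub_two_rpow_le (le_inf' _ _ fun k hk => (hα k (by simp at hk; omega)).1.le)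
      (inf'_le _ (by simp; omega))).trans hσ1
  have hΛ : ∀ t < j₀, ∀ i ≤ N, dCaputo (α i) τ (y i) t =
      robinOp N h (βt₁ t) (βt₂ t) (a · t) (d · t) (fun k => σ * y k (t + 1) + (1 - σ) * y k t) i +
        φ i t := by
    intro t ht i hi
    rcases Nat.eq_zero_or_pos i with rfl | hi₀
    · rw [robinOp, if_pos rfl]; exact hscheme0 t ht
    rcases hi.eq_or_lt with rfl | hiN
    · rw [robinOp, if_neg hi₀.ne', if_pos rfl]; exact hschemeN t ht
    · rw [robinOp, if_neg hi₀.ne', if_neg hiN.ne]; exact hscheme t ht i hi₀ (by omega)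
  have hlevel : ∀ t < j₀,
      gridSum N h (fun i => dCaputo (α i) τ (fun s => y i s ^ 2) t) +
        min c₁ β₀ * energyNormSq N h (fun k => σ * y k (t + 1) + (1 - σ) * y k t) ≤
      max (1 + l) (l ^ 2) / min c₁ β₀ *
        ((μt₁ t) ^ 2 + (μt₂ t) ^ 2 + interiorNormSq N h (φ · t)) := fun t ht =>
    gridSum_add_energyNormSq_le (by omega) hh₀ (lt_min hc₁ hβ₀)
      (hNh ▸ le_max_left _ _) (hNh ▸ le_max_right _ _)
      (fun i hi => (min_le_left _ _).trans (ha t ht i (mem_Icc.1 hi).1 (mem_Icc.1 hi).2))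
      (fun i hi => hd t ht i (by simp at hi; omega))
      ((min_le_right _ _).trans (hβ₁ t ht)) ((min_le_right _ _).trans (hβ₂ t ht))
      (hφ0 t ht) (hφN t ht)
      (fun i hi => dCaputo_sq_le (hα i hi).1.le (hα i hi).2 hτ₀ (hσα i hi) hσ2 (y i) t) (hΛ t ht)
  calc _ = gridSum N h (fun i => 1 / Real.Gamma (2 - α i) *
        ∑ s ∈ range (j + 1), caputoWeight (α i) τ (j - s) * y i (s + 1) ^ 2) +
      min c₁ β₀ * ∑ t ∈ range (j + 1),
        energyNormSq N h (fun k => σ * y k (t + 1) + (1 - σ) * y k t) * τ := rfl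
    _ ≤ max (1 + l) (l ^ 2) / min c₁ β₀ * ∑ t ∈ range (j + 1),
        ((μt₁ t) ^ 2 + (μt₂ t) ^ 2 + interiorNormSq N h (φ · t)) * τ +
      gridSum N h (fun i =>
        (((j + 1 : ℕ) : ℝ) * τ) ^ (1 - α i) / Real.Gamma (2 - α i) * y i 0 ^ 2) :=
        gridSum_add_sum_mul_le_of_forall_le (Y := fun i s => y i s ^ 2) (fun i hi => (hα i hi).2)
          hτ₀ fun t ht => hlevel t (by simp at ht; omega)
    _ = _ := by
        rw [gridSum_congr fun i hi => by rw [hic i hi]]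
        simp only [gridSum, interiorNormSq, Nat.cast_zero, zero_mul, mul_assoc]
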